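/- arXiv:2403.14079 — 2 statements merged into one kernel-verified Lean document; each statement's English description precedes it below -/
import Mathlib

section
/- For every nonzero v = (v₁, v₂, v₃) ∈ ℝ³, the entries of D(v) are differentiable functions of v, with gradients ∇_v D_{11}(v) = d_t (v₁, v₂, v₃)/|v| + (d_l − d_t)(v₁(v₁² + 2v₂² + 2v₃²), −v₁² v₂, −v₁² v₃)/|v|³; ∇_v D_{12}(v) = ∇_v D_{21}(v) = (d_l − d_t)(v₂(v₂² + v₃²), v₁(v₁² + v₃²), −v₁ v₂ v₃)/|v|³; ∇_v D_{13}(v) = ∇_v D_{31}(v) = (d_l − d_t)(v₃(v₂² + v₃²), −v₁ v₂ v₃, v₁(v₁² + v₂²))/|v|³; ∇_v D_{22}(v) = d_t (v₁, v₂, v₃)/|v| + (d_l − d_t)(−v₁ v₂², v₂(2v₁² + v₂² + 2v₃²), −v₂² v₃)/|v|³; ∇_v D_{23}(v) = ∇_v D_{32}(v) = (d_l − d_t)(−v₁ v₂ v₃, v₃(v₁² + v₃²), v₂(v₁² + v₂²))/|v|³; and ∇_v D_{33}(v) = d_t (v₁, v₂, v₃)/|v| + (d_l − d_t)(−v₁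 v₃², −v₂ v₃², v₃(2v₁² + 2v₂² + v₃²))/|v|³. -/
/-!
Away from the origin the Euclidean norm is differentiable with gradient `v / |v|`, so by the product
and chain rules `u ↦ u_i u_j / |u|` has gradient `(δ_ki v_j + δ_kj v_i) / |v| - v_i v_j v_k / |v|³`.
Hence
`∂_k D_ij(v) = d_t δ_ij v_k / |v| + (d_l - d_t) ((δ_ki v_j + δ_kj v_i) |v|² - v_i v_j v_k) / |v|³`,
and each stated gradient is this formula with `|v|² = v₁² + v₂² + v₃²` expanded.
-/

open scoped BigOperators

/-- Euclidean norm of a vector in ℝ³. -/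
noncomputable def norm3 (v : Fin 3 → ℝ) : ℝ := Real.sqrt (∑ i, v i ^ 2)

/-- The 3D Bear–Scheidegger diffusion–dispersion tensor. -/
noncomputable def bsD (φ dm dt dl : ℝ) (v : Fin 3 → ℝ) (i j : Fin 3) : ℝ :=
  (φ * dm + dt * norm3 v) * (if i = j then (1 : ℝ) else 0) + (dl - dt) * v i * v j / norm3 v

/-- The continuous linear map `u ↦ g · u` on ℝ³, i.e. the linear map whose
gradient vector is `g`. -/
noncomputable def clmOf (g : Fin 3 → ℝ) : (Fin 3 → ℝ) →L[ℝ] ℝ :=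
  ∑ k, g k • (ContinuousLinearMap.proj k : (Fin 3 → ℝ) →L[ℝ] ℝ)

open ContinuousLinearMap

section

variable {ι : Type*} [Fintype ι]

noncomputable def dotProductCLM (g : ι → ℝ) : (ι → ℝ) →L[ℝ] ℝ :=
  ∑ k, g k • proj k

theorem dotProductCLM_apply (g u : ι → ℝ) : dotProductCLM g u = ∑ k, g k * u k := by
  simp [dotProductCLM, sum_apply]

theorem sum_sq_pos_of_ne_zero {v : ι → ℝ} (hv : v ≠ 0) : 0 < ∑ k, v k ^ 2 := by
  obtain ⟨k, hk⟩ := Function.ne_iff.mp hv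
  exact Finset.sum_pos' (fun i _ => sq_nonneg _) ⟨k, Finset.mem_univ k, sq_pos_of_ne_zero hk⟩

theorem sqrt_sum_sq_pos_of_ne_zero {v : ι → ℝ} (hv : v ≠ 0) : 0 < √(∑ k, v k ^ 2) :=
  Real.sqrt_pos.mpr (sum_sq_pos_of_ne_zero hv)

theorem hasFDerivAt_sqrt_sum_sq {v : ι → ℝ} (hv : v ≠ 0) :
    HasFDerivAt (fun u => √(∑ i, u i ^ 2)) (dotProductCLM fun k => v k / √(∑ i, v i ^ 2)) v := by
  have hsum : HasFDerivAt (fun u : ι → ℝ => ∑ i, u i ^ 2) (dotProductCLM fun k => 2 * v k) v := by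
    refine (HasFDerivAt.fun_sum fun k _ =>
      (proj k : (ι → ℝ) →L[ℝ] ℝ).hasFDerivAt.pow 2).congr_fderiv ?_
    ext w
    simp [dotProductCLM_apply, sum_apply]
  refine (hsum.sqrt (sum_sq_pos_of_ne_zero hv).ne').congr_fderiv ?_
  ext w
  simp only [smul_apply, dotProductCLM_apply, smul_eq_mul, Finset.mul_sum]
  exact Finset.sum_congr rfl fun k _ => by ring

variable [DecidableEq ι]

theorem hasFDerivAt_mul_div_sqrt_sum_sq {v : ι → ℝ} (hv : v ≠ 0) (i j : ι) :
    HasFDerivAt (fun u => u i * u j / √(∑ i, u i ^ 2))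
      (dotProductCLM fun k =>
        ((if k = i then v j else 0) + (if k = j then v i else 0)) / √(∑ i, v i ^ 2)
          - v i * v j * v k / √(∑ i, v i ^ 2) ^ 3) v := by
  have hN : √(∑ i, v i ^ 2) ≠ 0 := (sqrt_sum_sq_pos_of_ne_zero hv).ne'
  have hinv := (hasDerivAt_inv hN).comp_hasFDerivAt v (hasFDerivAt_sqrt_sum_sq hv)
  have hprod := (proj i : (ι → ℝ) →L[ℝ] ℝ).hasFDerivAt.mul
    (proj j : (ι → ℝ) →L[ℝ] ℝ).hasFDerivAt (x := v)
  refine (hprod.mul hinv).congr_fderiv ?_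
  ext w
  simp only [dotProductCLM_apply, sub_mul, add_mul, div_mul_eq_mul_div, ite_mul, zero_mul,
    Finset.sum_sub_distrib, Finset.sum_add_distrib, ← Finset.sum_div, Finset.sum_ite_eq',
    Finset.mem_univ, if_true, add_apply, smul_apply, smul_eq_mul, Pi.mul_apply, proj_apply,
    Function.comp_apply]
  simp only [mul_assoc, ← Finset.mul_sum]
  field_simp
  ring

end

theorem clmOf_eq_dotProductCLM : clmOf = dotProductCLM := rfl

theorem norm3_sq (v : Fin 3 → ℝ) : norm3 v ^ 2 = v 0 ^ 2 + v 1 ^ 2 + v 2 ^ 2 := by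
  rw [norm3, Real.sq_sqrt (by positivity), Fin.sum_univ_three]

theorem hasFDerivAt_bsD (φ dm dt dl : ℝ) {v : Fin 3 → ℝ} (hv : v ≠ 0) (i j : Fin 3) :
    HasFDerivAt (fun u => bsD φ dm dt dl u i j)
      (clmOf fun k => dt * (if i = j then 1 else 0) * v k / norm3 v
        + (dl - dt) * (((if k = i then v j else 0) + (if k = j then v i else 0)) * norm3 v ^ 2
          - v i * v j * v k) / norm3 v ^ 3) v := by
  rw [clmOf_eq_dotProductCLM]
  have hnorm := ((hasFDerivAt_const (φ * dm) v).add
    ((hasFDerivAt_sqrt_sum_sq hv).const_mul dt)).mul_const (if i = j then (1 : ℝ) else 0)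
  have hprod := (hasFDerivAt_mul_div_sqrt_sum_sq hv i j).const_mul (dl - dt)
  refine ((hnorm.add hprod).congr_fderiv ?_).congr_of_eventuallyEq
    (Filter.Eventually.of_forall fun u => by simp only [bsD, norm3, Pi.add_apply]; ring)
  ext w
  have hN := (sqrt_sum_sq_pos_of_ne_zero hv).ne'
  simp only [add_apply, smul_apply, dotProductCLM_apply, smul_eq_mul, zero_add,
    Finset.mul_sum, ← Finset.sum_add_distrib]
  refine Finset.sum_congr rfl fun k _ => ?_
  unfold norm3
  field_simp

theorem stmt11_general (φ dm dt dl : ℝ)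
    (v : Fin 3 → ℝ) (hv : v ≠ 0) :
    HasFDerivAt (fun u => bsD φ dm dt dl u 0 0)
      (clmOf (fun k => dt * v k / norm3 v +
        (dl - dt) * ![v 0 * (v 0 ^ 2 + 2 * v 1 ^ 2 + 2 * v 2 ^ 2),
          -(v 0 ^ 2 * v 1), -(v 0 ^ 2 * v 2)] k / norm3 v ^ 3)) v ∧
    HasFDerivAt (fun u => bsD φ dm dt dl u 0 1)
      (clmOf (fun k => (dl - dt) * ![v 1 * (v 1 ^ 2 + v 2 ^ 2),
        v 0 * (v 0 ^ 2 + v 2 ^ 2), -(v 0 * v 1 * v 2)] k / norm3 v ^ 3)) v ∧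
    HasFDerivAt (fun u => bsD φ dm dt dl u 1 0)
      (clmOf (fun k => (dl - dt) * ![v 1 * (v 1 ^ 2 + v 2 ^ 2),
        v 0 * (v 0 ^ 2 + v 2 ^ 2), -(v 0 * v 1 * v 2)] k / norm3 v ^ 3)) v ∧
    HasFDerivAt (fun u => bsD φ dm dt dl u 0 2)
      (clmOf (fun k => (dl - dt) * ![v 2 * (v 1 ^ 2 + v 2 ^ 2),
        -(v 0 * v 1 * v 2), v 0 * (v 0 ^ 2 + v 1 ^ 2)] k / norm3 v ^ 3)) v ∧
    HasFDerivAt (fun u => bsD φ dm dt dl u 2 0)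
      (clmOf (fun k => (dl - dt) * ![v 2 * (v 1 ^ 2 + v 2 ^ 2),
        -(v 0 * v 1 * v 2), v 0 * (v 0 ^ 2 + v 1 ^ 2)] k / norm3 v ^ 3)) v ∧
    HasFDerivAt (fun u => bsD φ dm dt dl u 1 1)
      (clmOf (fun k => dt * v k / norm3 v +
        (dl - dt) * ![-(v 0 * v 1 ^ 2),
          v 1 * (2 * v 0 ^ 2 + v 1 ^ 2 + 2 * v 2 ^ 2), -(v 1 ^ 2 * v 2)] k / norm3 v ^ 3)) v ∧
    HasFDerivAt (fun u => bsD φ dm dt dl u 1 2)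
      (clmOf (fun k => (dl - dt) * ![-(v 0 * v 1 * v 2),
        v 2 * (v 0 ^ 2 + v 2 ^ 2), v 1 * (v 0 ^ 2 + v 1 ^ 2)] k / norm3 v ^ 3)) v ∧
    HasFDerivAt (fun u => bsD φ dm dt dl u 2 1)
      (clmOf (fun k => (dl - dt) * ![-(v 0 * v 1 * v 2),
        v 2 * (v 0 ^ 2 + v 2 ^ 2), v 1 * (v 0 ^ 2 + v 1 ^ 2)] k / norm3 v ^ 3)) v ∧
    HasFDerivAt (fun u => bsD φ dm dt dl u 2 2)
      (clmOf (fun k => dt * v k / norm3 v +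
        (dl - dt) * ![-(v 0 * v 2 ^ 2), -(v 1 * v 2 ^ 2),
          v 2 * (2 * v 0 ^ 2 + 2 * v 1 ^ 2 + v 2 ^ 2)] k / norm3 v ^ 3)) v := by
  refine ⟨?_, ?_, ?_, ?_, ?_, ?_, ?_, ?_, ?_⟩ <;>
    refine (hasFDerivAt_bsD φ dm dt dl hv _ _).congr_fderiv
      (congrArg clmOf (funext fun k => ?_)) <;>
    fin_cases k <;>
    simp only [Fin.isValue, Fin.zero_eta, Fin.mk_one, Fin.reduceFinMk, Fin.reduceEq, ↓reduceIte,
      Matrix.cons_val, Matrix.cons_val_zero, Matrix.cons_val_one, norm3_sq] <;>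
    ring

theorem stmt11 (φ dm dt dl : ℝ) (hφ : 0 < φ) (hdm : 0 < dm) (hdt : 0 < dt) (hdl : 0 < dl)
    (v : Fin 3 → ℝ) (hv : v ≠ 0) :
    HasFDerivAt (fun u => bsD φ dm dt dl u 0 0)
      (clmOf (fun k => dt * v k / norm3 v +
        (dl - dt) * ![v 0 * (v 0 ^ 2 + 2 * v 1 ^ 2 + 2 * v 2 ^ 2),
          -(v 0 ^ 2 * v 1), -(v 0 ^ 2 * v 2)] k / norm3 v ^ 3)) v ∧
    HasFDerivAt (fun u => bsD φ dm dt dl u 0 1)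
      (clmOf (fun k => (dl - dt) * ![v 1 * (v 1 ^ 2 + v 2 ^ 2),
        v 0 * (v 0 ^ 2 + v 2 ^ 2), -(v 0 * v 1 * v 2)] k / norm3 v ^ 3)) v ∧
    HasFDerivAt (fun u => bsD φ dm dt dl u 1 0)
      (clmOf (fun k => (dl - dt) * ![v 1 * (v 1 ^ 2 + v 2 ^ 2),
        v 0 * (v 0 ^ 2 + v 2 ^ 2), -(v 0 * v 1 * v 2)] k / norm3 v ^ 3)) v ∧
    HasFDerivAt (fun u => bsD φ dm dt dl u 0 2)
      (clmOf (fun k => (dl - dt) * ![v 2 * (v 1 ^ 2 + v 2 ^ 2),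
        -(v 0 * v 1 * v 2), v 0 * (v 0 ^ 2 + v 1 ^ 2)] k / norm3 v ^ 3)) v ∧
    HasFDerivAt (fun u => bsD φ dm dt dl u 2 0)
      (clmOf (fun k => (dl - dt) * ![v 2 * (v 1 ^ 2 + v 2 ^ 2),
        -(v 0 * v 1 * v 2), v 0 * (v 0 ^ 2 + v 1 ^ 2)] k / norm3 v ^ 3)) v ∧
    HasFDerivAt (fun u => bsD φ dm dt dl u 1 1)
      (clmOf (fun k => dt * v k / norm3 v +
        (dl - dt) * ![-(v 0 * v 1 ^ 2),
          v 1 * (2 * v 0 ^ 2 + v 1 ^ 2 + 2 * v 2 ^ 2), -(v 1 ^ 2 * v 2)] k / norm3 v ^ 3)) v ∧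
    HasFDerivAt (fun u => bsD φ dm dt dl u 1 2)
      (clmOf (fun k => (dl - dt) * ![-(v 0 * v 1 * v 2),
        v 2 * (v 0 ^ 2 + v 2 ^ 2), v 1 * (v 0 ^ 2 + v 1 ^ 2)] k / norm3 v ^ 3)) v ∧
    HasFDerivAt (fun u => bsD φ dm dt dl u 2 1)
      (clmOf (fun k => (dl - dt) * ![-(v 0 * v 1 * v 2),
        v 2 * (v 0 ^ 2 + v 2 ^ 2), v 1 * (v 0 ^ 2 + v 1 ^ 2)] k / norm3 v ^ 3)) v ∧
    HasFDerivAt (fun u => bsD φ dm dt dl u 2 2)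
      (clmOf (fun k => dt * v k / norm3 v +
        (dl - dt) * ![-(v 0 * v 2 ^ 2), -(v 1 * v 2 ^ 2),
          v 2 * (2 * v 0 ^ 2 + 2 * v 1 ^ 2 + v 2 ^ 2)] k / norm3 v ^ 3)) v :=
  stmt11_general φ dm dt dl v hv
end

section
/- Let n ∈ ℝ³ be a unit vector, let v ∈ ℝ³ be nonzero with v · n = 0, and let g, w ∈ ℝ³ satisfy (D(v) g) · n = 0 and (D(v) w) · n = 0. Then [(Ê(v) ⊗ g) w] · n = 0, i.e., Σ_{k=1}^{3} n_k Σ_{i=1}^{3} (Σ_{j=1}^{3} ∂_{v_k} D_{ij}(v) g_j) w_i = 0. -/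
/-!
Differentiating `D(v) = (φ d_m + d_t |v|) I + (d_l - d_t) v vᵀ / |v|` gives
`∂_k D_ij = d_t v_k δ_ij / |v| + (d_l - d_t) ((δ_ik v_j + δ_jk v_i) / |v| - v_i v_j v_k / |v|³)`,
so the contraction `n_k g_j w_i ∂_k D_ij` is a combination of `v·n`, `g·n` and `w·n`.
When `v·n = 0` we have `(D(v) g)·n = (φ d_m + d_t |v|) (g·n)`, and the coefficient is positive,
so the hypotheses force `g·n = w·n = 0` as well.
-/

open scoped BigOperators

/-- The partial derivative `∂_{v_k} D_{ij}(v)`. -/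
noncomputable def pD (φ dm dt dl : ℝ) (v : Fin 3 → ℝ) (i j k : Fin 3) : ℝ :=
  fderiv ℝ (fun u => bsD φ dm dt dl u i j) v (Pi.single k 1)

open ContinuousLinearMap

theorem hasFDerivAt_sum_sq {ι : Type*} [Fintype ι] (v : ι → ℝ) :
    HasFDerivAt (fun u : ι → ℝ => ∑ i, u i ^ 2)
      (∑ i, (2 * v i) • proj (R := ℝ) (φ := fun _ : ι => ℝ) i) v := by
  refine HasFDerivAt.fun_sum fun i _ => ?_
  simpa using (hasFDerivAt_apply (𝕜 := ℝ) i v).pow 2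

theorem norm3_pos {v : Fin 3 → ℝ} (hv : v ≠ 0) : 0 < norm3 v := by
  obtain ⟨i, hi⟩ := Function.ne_iff.mp hv
  exact Real.sqrt_pos.mpr <| Finset.sum_pos' (fun j _ => sq_nonneg (v j))
    ⟨i, Finset.mem_univ i, by simpa [sq_pos_iff] using hi⟩

theorem hasFDerivAt_norm3 {v : Fin 3 → ℝ} (hv : v ≠ 0) :
    HasFDerivAt norm3 ((norm3 v)⁻¹ • ∑ i, v i • proj (R := ℝ) (φ := fun _ : Fin 3 => ℝ) i) v := by
  have hs : ∑ i, v i ^ 2 ≠ 0 := (Real.sqrt_pos.mp (norm3_pos hv)).ne'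
  refine ((hasFDerivAt_sum_sq v).sqrt hs).congr_fderiv ?_
  ext h
  simp only [smul_apply, sum_apply, proj_apply, smul_eq_mul, Finset.mul_sum, norm3]
  exact Finset.sum_congr rfl fun i _ => by ring

theorem pD_eq {φ dm dt dl : ℝ} {v : Fin 3 → ℝ} (hv : v ≠ 0) (i j k : Fin 3) :
    pD φ dm dt dl v i j k =
      dt * v k / norm3 v * (if i = j then 1 else 0)
        + (dl - dt) * (((if i = k then 1 else 0) * v j + (if j = k then 1 else 0) * v i) / norm3 v
          - v i * v j * v k / norm3 v ^ 3) := by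
  have hr := (norm3_pos hv).ne'
  have hinv : HasFDerivAt (fun u => (norm3 u)⁻¹) _ v :=
    (hasDerivAt_inv hr).comp_hasFDerivAt v (hasFDerivAt_norm3 hv)
  have H := (((hasFDerivAt_const (φ * dm) v).fun_add ((hasFDerivAt_norm3 hv).const_mul dt)).mul_const
    (if i = j then (1 : ℝ) else 0)).fun_add ((((hasFDerivAt_apply (𝕜 := ℝ) i v).const_mul
      (dl - dt)).fun_mul (hasFDerivAt_apply (𝕜 := ℝ) j v)).fun_mul hinv)
  simp only [pD, bsD, div_eq_mul_inv]
  rw [H.fderiv]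
  simp only [add_apply, smul_apply, sum_apply, proj_apply, zero_apply, Pi.single_apply,
    smul_eq_mul, mul_ite, mul_one, mul_zero, Finset.sum_ite_eq', Finset.mem_univ, if_true]
  split_ifs <;> ring

theorem bsD_contract_eq (φ dm dt dl : ℝ) (v g n : Fin 3 → ℝ) :
    ∑ i, (∑ j, bsD φ dm dt dl v i j * g j) * n i =
      (φ * dm + dt * norm3 v) * (g ⬝ᵥ n) + (dl - dt) * (v ⬝ᵥ g) * (v ⬝ᵥ n) / norm3 v := by
  simp only [bsD, dotProduct, Fin.sum_univ_three, Fin.isValue, Fin.reduceEq, if_true, if_false]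
  ring

theorem pD_contract_eq (φ dm dt dl : ℝ) {v : Fin 3 → ℝ} (hv : v ≠ 0) (n g w : Fin 3 → ℝ) :
    ∑ k, n k * ∑ i, (∑ j, pD φ dm dt dl v i j k * g j) * w i =
      (dt * (g ⬝ᵥ w) * (v ⬝ᵥ n) + (dl - dt) * ((v ⬝ᵥ g) * (w ⬝ᵥ n) + (v ⬝ᵥ w) * (g ⬝ᵥ n)))
          / norm3 v
        - (dl - dt) * (v ⬝ᵥ g) * (v ⬝ᵥ w) * (v ⬝ᵥ n) / norm3 v ^ 3 := by
  simp only [pD_eq hv, dotProduct, Fin.sum_univ_three, Fin.isValue, Fin.reduceEq, if_true,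
    if_false]
  ring

theorem dotProduct_eq_zero_of_bsD_contract_eq_zero {φ dm dt dl : ℝ} (hφ : 0 < φ) (hdm : 0 < dm)
    (hdt : 0 < dt) {v g n : Fin 3 → ℝ} (hvn : v ⬝ᵥ n = 0)
    (hg : ∑ i, (∑ j, bsD φ dm dt dl v i j * g j) * n i = 0) : g ⬝ᵥ n = 0 := by
  have hr : 0 ≤ norm3 v := Real.sqrt_nonneg _
  rw [bsD_contract_eq, hvn, mul_zero, zero_div, add_zero] at hg
  exact (mul_eq_zero.mp hg).resolve_left (by positivity)

theorem stmt19_general (φ dm dt dl : ℝ) (hφ : 0 < φ) (hdm : 0 < dm) (hdt : 0 < dt)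
    (n v g w : Fin 3 → ℝ) (hv : v ≠ 0)
    (hvn : ∑ i, v i * n i = 0)
    (hg : ∑ i, (∑ j, bsD φ dm dt dl v i j * g j) * n i = 0)
    (hw : ∑ i, (∑ j, bsD φ dm dt dl v i j * w j) * n i = 0) :
    ∑ k, n k * ∑ i, (∑ j, pD φ dm dt dl v i j k * g j) * w i = 0 := by
  have hvn : v ⬝ᵥ n = 0 := hvn
  rw [pD_contract_eq φ dm dt dl hv, hvn,
    dotProduct_eq_zero_of_bsD_contract_eq_zero hφ hdm hdt hvn hg,
    dotProduct_eq_zero_of_bsD_contract_eq_zero hφ hdm hdt hvn hw]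
  ring

theorem stmt19 (φ dm dt dl : ℝ) (hφ : 0 < φ) (hdm : 0 < dm) (hdt : 0 < dt) (hdl : 0 < dl)
    (n v g w : Fin 3 → ℝ) (hn : ∑ i, n i ^ 2 = 1) (hv : v ≠ 0)
    (hvn : ∑ i, v i * n i = 0)
    (hg : ∑ i, (∑ j, bsD φ dm dt dl v i j * g j) * n i = 0)
    (hw : ∑ i, (∑ j, bsD φ dm dt dl v i j * w j) * n i = 0) :
    ∑ k, n k * ∑ i, (∑ j, pD φ dm dt dl v i j k * g j) * w i = 0 :=
  stmt19_general φ dm dt dl hφ hdm hdt n v g w hv hvn hg hw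
end
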